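/- (Deterministic core of Lemma 3.1) Let p₁,…,p_s ∈ [0,1] with order statistics p₍₁₎ ≤ ⋯ ≤ p₍ₛ₎, let I ⊆ {1,…,s} with |I| ≥ k, and let q₍₁₎ ≤ ⋯ ≤ q₍|I|₎ be the ordered values of (pᵢ)_{i∈I}. Let α₁ ≤ ⋯ ≤ α_s. If the stepup procedure (rejecting the r smallest p-values where r is the largest index with p₍ᵣ₎ ≤ α_r) rejects at least k indices belonging to I, then there exists j with k ≤ j ≤ |I| such that q₍ⱼ₎ ≤ α_{s-|I|+j}. -/

import Mathlib

/-!
Let `r` be the number of rejections and `m` the number of rejected indices in `I`. Every rejected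
p-value is at most `p_(r) ≤ α_r`, so at least `m` of the p-values indexed by `I` are `≤ α_r`, i.e.
`q_(m) ≤ α_r`. At most `s - |I|` rejections fall outside `I`, so `r ≤ s - |I| + m`, and
monotonicity of `α` gives `q_(m) ≤ α_{s-|I|+m}`; take `j = m ≥ k`.
-/

open MeasureTheory Finset
open scoped Classical

/-- `orderStat p k` is the `k`-th smallest value (1-indexed) among `p 0, …, p (n-1)`. -/
noncomputable def orderStat {n : ℕ} (p : Fin n → ℝ) (k : ℕ) : ℝ :=
  if h : k - 1 < n then p (Tuple.sort p ⟨k - 1, h⟩) else 0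

/-- The number of rejections of the stepup procedure with critical values
`c 1 ≤ … ≤ c n` (1-indexed): the largest `j` with `p_(j) ≤ c j` (0 if none). -/
noncomputable def numReject {n : ℕ} (c : ℕ → ℝ) (p : Fin n → ℝ) : ℕ :=
  ((Finset.Icc 1 n).filter (fun j => orderStat p j ≤ c j)).sup id

/-- The indices rejected by the stepup procedure: those carrying the
`numReject c p` smallest p-values (via the sorting permutation). -/
noncomputable def rejectedSet {n : ℕ} (c : ℕ → ℝ) (p : Fin n → ℝ) : Finset (Fin n) :=
  (Finset.univ.filter (fun j : Fin n => (j : ℕ) + 1 ≤ numReject c p)).image (Tuple.sort p)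

/-- The `k`-th smallest (1-indexed) of the p-values with indices in `I`. -/
noncomputable def trueOrderStat {n : ℕ} (I : Finset (Fin n)) (p : Fin n → ℝ) (k : ℕ) : ℝ :=
  orderStat (fun j : Fin I.card => p (I.orderIsoOfFin rfl j).1) k

section OrderStat

variable {n : ℕ}

theorem apply_sort_le_orderStat (f : Fin n → ℝ) {r : ℕ} (hr : r ≤ n) {j : Fin n}
    (hj : (j : ℕ) < r) : f (Tuple.sort f j) ≤ orderStat f r := by
  rw [orderStat, dif_pos (by omega)]
  exact Tuple.monotone_sort f (Fin.mk_le_mk.mpr (by omega) : j ≤ ⟨r - 1, by omega⟩)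

theorem orderStat_le_of_le_card_filter (f : Fin n → ℝ) {m : ℕ} (hm : 1 ≤ m) {t : ℝ}
    (h : m ≤ #{j | f j ≤ t}) : orderStat f m ≤ t := by
  have hmn : m - 1 < n := by
    have := h.trans ((card_le_univ _).trans_eq (Fintype.card_fin n))
    omega
  rw [orderStat, dif_pos hmn]
  by_contra! hlt
  have hbefore : Set.MapsTo (fun j => ((Tuple.sort f).symm j : ℕ))
      (univ.filter fun j => f j ≤ t) (range (m - 1)) := by
    intro j hj
    simp only [coe_filter, mem_univ, true_and, Set.mem_ofPred_eq] at hj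
    simp only [coe_range, Set.mem_Iio]
    by_contra! hge
    have : f (Tuple.sort f ⟨m - 1, hmn⟩) ≤ f (Tuple.sort f ((Tuple.sort f).symm j)) :=
      Tuple.monotone_sort f (Fin.mk_le_mk.mpr hge : ⟨m - 1, hmn⟩ ≤ (Tuple.sort f).symm j)
    rw [Equiv.apply_symm_apply] at this
    linarith
  have hinj : Set.InjOn (fun j => ((Tuple.sort f).symm j : ℕ)) (univ.filter fun j => f j ≤ t) :=
    fun _ _ _ _ e => (Tuple.sort f).symm.injective (Fin.val_injective e)
  have := card_le_card_of_injOn _ hbefore hinj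
  rw [card_range] at this
  omega

theorem trueOrderStat_le_of_le_card_filter (I : Finset (Fin n)) (p : Fin n → ℝ) {m : ℕ}
    (hm : 1 ≤ m) {t : ℝ} (h : m ≤ #{i ∈ I | p i ≤ t}) : trueOrderStat I p m ≤ t := by
  refine orderStat_le_of_le_card_filter _ hm (h.trans_eq ?_)
  have hI : I.filter (p · ≤ t) = (univ.filter fun j => p (I.orderEmbOfFin rfl j) ≤ t).map
      (I.orderEmbOfFin rfl).toEmbedding := by
    conv_lhs => rw [← map_orderEmbOfFin_univ I rfl]
    rw [filter_map]
    rfl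
  rw [hI, card_map]
  rfl

end OrderStat

section StepUp

variable {n : ℕ} (c : ℕ → ℝ) (p : Fin n → ℝ)

theorem numReject_le : numReject c p ≤ n :=
  Finset.sup_le fun _ hj => (mem_Icc.mp (mem_filter.mp hj).1).2

theorem orderStat_numReject_le (h : 0 < numReject c p) :
    orderStat p (numReject c p) ≤ c (numReject c p) := by
  set S := (Icc 1 n).filter fun j => orderStat p j ≤ c j
  have hS : S.Nonempty := nonempty_iff_ne_empty.mpr fun hS => by
    simp [numReject, S, hS] at h
  obtain ⟨j, hj, hsup⟩ := exists_mem_eq_sup S hS id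
  have : numReject c p = j := hsup
  exact this ▸ (mem_filter.mp hj).2

theorem card_rejectedSet : #(rejectedSet c p) = numReject c p := by
  rw [rejectedSet, card_image_of_injective _ (Tuple.sort p).injective]
  simp only [Nat.add_one_le_iff, Fin.card_filter_val_lt]
  exact min_eq_right (numReject_le c p)

theorem le_orderStat_numReject_of_mem_rejectedSet {i : Fin n} (hi : i ∈ rejectedSet c p) :
    p i ≤ orderStat p (numReject c p) := by
  obtain ⟨j, hj, rfl⟩ := mem_image.mp hi
  exact apply_sort_le_orderStat p (numReject_le c p) (mem_filter.mp hj).2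

theorem numReject_le_sub_card_add_card_inter (I : Finset (Fin n)) :
    numReject c p ≤ n - #I + #(rejectedSet c p ∩ I) := by
  have hout : #(rejectedSet c p \ I) ≤ n - #I := by
    simpa [card_compl] using card_le_card
      (fun x hx => mem_compl.mpr (mem_sdiff.mp hx).2 : rejectedSet c p \ I ⊆ Iᶜ)
  have := card_sdiff_add_card_inter (rejectedSet c p) I
  rw [card_rejectedSet] at this
  omega

end StepUp

theorem stmt7_general {s : ℕ} (p : Fin s → ℝ)
    (I : Finset (Fin s)) (k : ℕ) (hk1 : 1 ≤ k)
    (c : ℕ → ℝ) (hc : ∀ i j, 1 ≤ i → i ≤ j → j ≤ s → c i ≤ c j)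
    (hrej : k ≤ (rejectedSet c p ∩ I).card) :
    ∃ j, k ≤ j ∧ j ≤ I.card ∧ trueOrderStat I p j ≤ c (s - I.card + j) := by
  set r := numReject c p
  set m := #(rejectedSet c p ∩ I)
  have hmr : m ≤ r := (card_le_card inter_subset_left).trans_eq (card_rejectedSet c p)
  have hmI : m ≤ #I := card_le_card inter_subset_right
  have hIs : #I ≤ s := (card_le_univ I).trans_eq (Fintype.card_fin s)
  have hq : trueOrderStat I p m ≤ orderStat p r :=
    trueOrderStat_le_of_le_card_filter I p (hk1.trans hrej) <| card_le_card fun i hi =>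
      mem_filter.mpr ⟨(mem_inter.mp hi).2,
        le_orderStat_numReject_of_mem_rejectedSet c p (mem_inter.mp hi).1⟩
  have hr : orderStat p r ≤ c r := orderStat_numReject_le c p (by omega)
  have hα : c r ≤ c (s - #I + m) :=
    hc _ _ (by omega) (numReject_le_sub_card_add_card_inter c p I) (by omega)
  exact ⟨m, hrej, hmI, hq.trans (hr.trans hα)⟩

/-- Deterministic core of Lemma 3.1: if the stepup procedure rejects at least
`k` indices belonging to `I`, then `q_(j) ≤ α_{s-|I|+j}` for some `k ≤ j ≤ |I|`. -/
theorem stmt7 {s : ℕ} (p : Fin s → ℝ) (hval : ∀ i, p i ∈ Set.Icc (0 : ℝ) 1)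
    (I : Finset (Fin s)) (k : ℕ) (hk1 : 1 ≤ k) (hkI : k ≤ I.card)
    (c : ℕ → ℝ) (hc : ∀ i j, 1 ≤ i → i ≤ j → j ≤ s → c i ≤ c j)
    (hrej : k ≤ (rejectedSet c p ∩ I).card) :
    ∃ j, k ≤ j ∧ j ≤ I.card ∧ trueOrderStat I p j ≤ c (s - I.card + j) :=
  stmt7_general p I k hk1 c hc hrej
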